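/- Let S_j (j ∈ ℤ) be local potentials satisfying conditions A–E. For all (p,q) ∈ ℕ×ℤ with p ≥ 1, the collection of (p,q)-minimizers is nonempty, closed under pointwise convergence, shift-invariant, and strictly ordered (any two distinct (p,q)-minimizers x,y satisfy x ≪ y or y ≪ x, where x ≪ y means x_i < y_i for all i). In particular every (p,q)-minimizer is a Birkhoff sequence. Moreover, x ∈ X_{p,q} is a (p,q)-minimizer if and only if it is an (np,nq)-minimizer for every n ∈ ℕ with n ≥ 1, if and only if it is a global minimizer. -/

import Mathlib

open Filter Topology

/-- The shift map `τ_{k,l}`: `(τ_{k,l} x) i = x (i - k) + l`. -/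
def tau (k l : ℤ) (x : ℤ → ℝ) : ℤ → ℝ := fun i => x (i - k) + (l : ℝ)

/-- A sequence is Birkhoff (well-ordered) if its integer translates are totally ordered
in the pointwise partial order. -/
def Birkhoff (x : ℤ → ℝ) : Prop :=
  ∀ k l k' l' : ℤ, tau k l x ≤ tau k' l' x ∨ tau k' l' x ≤ tau k l x

/-- `x` has rotation number `ω` if `x n / n → ω` as `n → ±∞`. -/
def HasRotNum (x : ℤ → ℝ) (ω : ℝ) : Prop :=
  Tendsto (fun n : ℤ => x n / (n : ℝ)) atTop (𝓝 ω) ∧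
  Tendsto (fun n : ℤ => x n / (n : ℝ)) atBot (𝓝 ω)

/-- A Birkhoff sequence of rotation number `ω` is maximally periodic if `τ_{k,l} x = x`
whenever `-ω k + l = 0`. -/
def MaxPeriodic (ω : ℝ) (x : ℤ → ℝ) : Prop :=
  ∀ k l : ℤ, -ω * (k : ℝ) + (l : ℝ) = 0 → tau k l x = x

/-- Partial derivative of a function on sequence space with respect to coordinate `i`. -/
noncomputable def pd (F : (ℤ → ℝ) → ℝ) (i : ℤ) : (ℤ → ℝ) → ℝ :=
  fun x => deriv (fun t => F (Function.update x i t)) (x i)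

/-- Iterated partial derivatives along a list of coordinates. -/
noncomputable def pdList (F : (ℤ → ℝ) → ℝ) : List ℤ → (ℤ → ℝ) → ℝ
  | [] => F
  | i :: L => pd (pdList F L) i

/-- `F` and `G` are `ε`-close in the `C^k` norm: all iterated partial derivatives of order
`≤ k` of the difference are bounded by `ε`. -/
def CkClose (k : ℕ) (ε : ℝ) (F G : (ℤ → ℝ) → ℝ) : Prop :=
  ∀ L : List ℤ, L.length ≤ k → ∀ x : ℤ → ℝ, |pdList (fun y => F y - G y) L x| ≤ ε

/-- Conditions A-E on a family of local potentials `S j : ℝ^ℤ → ℝ`, with range `r` and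
uniform derivative bound `C`. -/
structure SatisfiesAE (r : ℕ) (C : ℝ) (S : ℤ → (ℤ → ℝ) → ℝ) : Prop where
  r_pos : 1 ≤ r
  C_pos : 0 < C
  /- A: finite range -/
  finRange : ∀ j : ℤ, ∀ x y : ℤ → ℝ, (∀ i : ℤ, |i - j| ≤ (r : ℤ) → x i = y i) → S j x = S j y
  /- A: C² smoothness -/
  contS : ∀ j : ℤ, Continuous (S j)
  diff1 : ∀ j i : ℤ, ∀ x : ℤ → ℝ, DifferentiableAt ℝ (fun t => S j (Function.update x i t)) (x i)
  diff2 : ∀ j i k : ℤ, ∀ x : ℤ → ℝ,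
    DifferentiableAt ℝ (fun t => pd (S j) i (Function.update x k t)) (x k)
  cont1 : ∀ j i : ℤ, Continuous (pd (S j) i)
  cont2 : ∀ j i k : ℤ, Continuous (pd (pd (S j) i) k)
  /- B: shift invariance -/
  shiftInv : ∀ j k l : ℤ, ∀ x : ℤ → ℝ, S j x = S (j + k) (tau k l x)
  /- C: coercivity -/
  coercive : ∀ j k : ℤ, |k - j| = 1 → ∀ M : ℝ, ∃ R : ℝ, ∀ x : ℤ → ℝ, R ≤ |x k - x j| → M ≤ S j x
  /- D: monotonicity -/
  mono : ∀ j i k : ℤ, i ≠ k → ∀ x : ℤ → ℝ, pd (pd (S j) i) k x ≤ 0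
  monoStrict : ∀ j k : ℤ, |j - k| = 1 → ∀ x : ℤ → ℝ, pd (pd (S j) j) k x < 0
  /- E: bounded derivatives -/
  bdd1 : ∀ j i : ℤ, ∀ x : ℤ → ℝ, |pd (S j) i x| ≤ C
  bdd2 : ∀ j i k : ℤ, ∀ x : ℤ → ℝ, |pd (pd (S j) i) k x| ≤ C

/-- The periodic action `W_p(x) = ∑_{j=1}^p S_j(x)`. -/
noncomputable def Wper (S : ℤ → (ℤ → ℝ) → ℝ) (p : ℕ) (x : ℤ → ℝ) : ℝ :=
  ∑ j ∈ Finset.Icc (1 : ℤ) (p : ℤ), S j x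

/-- A `(p,q)`-periodic minimizer: `τ_{p,q} x = x` and `x` minimizes `W_p` over `X_{p,q}`. -/
def PerMin (S : ℤ → (ℤ → ℝ) → ℝ) (p : ℕ) (q : ℤ) (x : ℤ → ℝ) : Prop :=
  tau (p : ℤ) q x = x ∧ ∀ y : ℤ → ℝ, tau (p : ℤ) q y = y → Wper S p x ≤ Wper S p y

/-- The (formally convergent, by finite range) energy difference `W(x+y) - W(x)`. -/
noncomputable def Wdiff (S : ℤ → (ℤ → ℝ) → ℝ) (x y : ℤ → ℝ) : ℝ :=
  ∑' j : ℤ, (S j (fun i => x i + y i) - S j x)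

/-- `x` is a global minimizer: every finite-support variation does not decrease the energy. -/
def GlobalMin (S : ℤ → (ℤ → ℝ) → ℝ) (x : ℤ → ℝ) : Prop :=
  ∀ y : ℤ → ℝ, (Function.support y).Finite → 0 ≤ Wdiff S x y

/-- The extended orbit `Σ_y = { y k + l : k, l ∈ ℤ }`. -/
def extOrbit (y : ℤ → ℝ) : Set ℝ := {ξ : ℝ | ∃ k l : ℤ, ξ = y k + (l : ℝ)}

/-!
Submodularity `W(x ⊓ y) + W(x ⊔ y) ≤ W(x) + W(y)`, which follows from `∂ᵢ∂ₖ Sⱼ ≤ 0`, makes the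
infimum of two minimizers a minimizer; together with the strong comparison principle for the
Euler–Lagrange equations (from `∂ⱼ∂ₖ Sⱼ < 0` for `|j - k| = 1`) this orders any two minimizers
strictly. The infimum of the `τ_{p,q}`-orbit of an `(np, nq)`-minimizer is `(p, q)`-periodic, so
`(p, q)`-minimizers are `(np, nq)`-minimizers. A compactly supported variation of `x` can then be
repeated periodically with a long period, so `(p, q)`-minimizers are global minimizers.
Conversely, gluing a competitor `w ∈ X_{p,q}` into a global minimizer `x` along `n` periods changes
the energy by `n (W_p(w) - W_p(x))` plus boundary terms bounded independently of `n`. Existence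
comes from coercivity: after an integer translation, sublevel sets of `W_p` on `X_{p,q}` are
compact.
-/

open Finset Function

lemma tau_apply (k l : ℤ) (x : ℤ → ℝ) (i : ℤ) : tau k l x i = x (i - k) + l := rfl

lemma tau_tau (k l k' l' : ℤ) (x : ℤ → ℝ) :
    tau k l (tau k' l' x) = tau (k + k') (l + l') x := by
  ext i
  simp only [tau_apply, Int.cast_add, sub_sub]
  ring

@[simp]
lemma tau_zero (x : ℤ → ℝ) : tau 0 0 x = x := by
  ext i
  simp [tau_apply]

lemma tau_comm (k l k' l' : ℤ) (x : ℤ → ℝ) :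
    tau k l (tau k' l' x) = tau k' l' (tau k l x) := by
  rw [tau_tau, tau_tau, add_comm k, add_comm l]

lemma apply_add_of_tau_eq {p q : ℤ} {x : ℤ → ℝ} (h : tau p q x = x) (i : ℤ) :
    x (i + p) = x i + q := by
  have := congrFun h (i + p)
  simp only [tau_apply, add_sub_cancel_right] at this
  linarith

lemma tau_mul_eq_self {p q : ℤ} {x : ℤ → ℝ} (h : tau p q x = x) (n : ℕ) :
    tau (n * p) (n * q) x = x := by
  induction n with
  | zero => simp
  | succ n ih => rw [Nat.cast_succ, add_one_mul, add_one_mul, ← tau_tau, h, ih]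

lemma tau_add_periodic_eq_self {p q : ℤ} {x Y : ℤ → ℝ} (hx : tau p q x = x) (hY : Periodic Y p) :
    tau p q (fun i => x i + Y i) = fun i => x i + Y i := by
  ext i
  have := apply_add_of_tau_eq hx (i - p)
  simp only [tau_apply]
  rw [← hY (i - p), sub_add_cancel] at *
  linarith

lemma continuous_tau (k l : ℤ) : Continuous (tau k l) :=
  continuous_pi fun _ => (continuous_apply _).add continuous_const

lemma tau_inf (k l : ℤ) (x y : ℤ → ℝ) : tau k l (x ⊓ y) = tau k l x ⊓ tau k l y := by
  ext i
  exact (min_add_add_right _ _ _).symm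

lemma tau_sup (k l : ℤ) (x y : ℤ → ℝ) : tau k l (x ⊔ y) = tau k l x ⊔ tau k l y := by
  ext i
  exact (max_add_add_right _ _ _).symm

lemma abs_sub_le_mul_of_abs_succ_sub_le {x : ℤ → ℝ} {R : ℝ} (h : ∀ i, |x (i + 1) - x i| ≤ R)
    (i j : ℤ) : |x i - x j| ≤ R * |(i : ℝ) - j| := by
  wlog hij : j ≤ i generalizing i j
  · rw [abs_sub_comm, abs_sub_comm (i : ℝ)]
    exact this j i (by omega)
  induction i, hij using Int.leInduction with
  | base => simp
  | succ i hji ih =>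
    have hji' : (j : ℝ) ≤ i := by exact_mod_cast hji
    calc |x (i + 1) - x j| ≤ |x (i + 1) - x i| + |x i - x j| := abs_sub_le _ _ _
      _ ≤ R + R * |(i : ℝ) - j| := add_le_add (h i) ih
      _ = R * |((i + 1 : ℤ) : ℝ) - j| := by
        rw [abs_of_nonneg (by linarith), abs_of_nonneg (by push_cast; linarith)]
        push_cast
        ring

lemma exists_periodic_eqOn {M : Type*} [Zero M] {y : ℤ → M} {a b T : ℤ} (hT : 0 < T)
    (hab : a ≤ b) (hy : support y ⊆ Set.Icc a b) :
    ∃ Y : ℤ → M, Periodic Y T ∧ ∀ m, b - T < m → m < a + T → Y m = y m := by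
  have hy0 : ∀ m, (m < a ∨ b < m) → y m = 0 := fun m hm => by
    by_contra h
    have := hy h
    simp only [Set.mem_Icc] at this
    omega
  refine ⟨fun m => y (toIcoMod hT a m), fun m => by simp [toIcoMod_add_right], fun m h1 h2 => ?_⟩
  show y (toIcoMod hT a m) = y m
  rcases le_or_gt a m with h | h
  · rw [(toIcoMod_eq_self hT).2 ⟨h, h2⟩]
  · rw [← toIcoMod_add_right, (toIcoMod_eq_self hT).2 ⟨by omega, by omega⟩, hy0 _ (by omega),
      hy0 _ (by omega)]

lemma sum_Ioc_le_mul {f : ℤ → ℝ} {G : ℝ} (hf : ∀ j, f j ≤ G) {a b : ℤ} (hab : a ≤ b) :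
    ∑ j ∈ Ioc a b, f j ≤ (b - a : ℤ) * G := by
  refine (sum_le_card_nsmul _ _ _ fun j _ => hf j).trans_eq ?_
  rw [Int.card_Ioc, nsmul_eq_mul, ← Int.cast_natCast, Int.toNat_of_nonneg (by omega)]

lemma sum_Ioc_add_sum_Ioc {M : Type*} [AddCommMonoid M] (f : ℤ → M) {a b c : ℤ} (hab : a ≤ b)
    (hbc : b ≤ c) : ∑ j ∈ Ioc a b, f j + ∑ j ∈ Ioc b c, f j = ∑ j ∈ Ioc a c, f j := by
  rw [← sum_union (Ioc_disjoint_Ioc_of_le le_rfl), Ioc_union_Ioc_eq_Ioc hab hbc]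

namespace Function.Periodic

variable {M : Type*} [AddCommMonoid M] {f : ℤ → M} {T : ℤ}

lemma sum_Ioc_add_eq (hf : Periodic f T) (hT : 0 < T) (a : ℤ) :
    ∑ j ∈ Ioc a (a + T), f j = ∑ j ∈ Ioc 0 T, f j := by
  have mem : ∀ b j, toIocMod hT b j ∈ Ioc b (b + T) := fun b j => by
    simpa only [mem_Ioc, Set.mem_Ioc] using toIocMod_mem_Ioc hT b j
  refine sum_nbij' (toIocMod hT 0) (toIocMod hT a) (fun j _ => by simpa using mem 0 j)
    (fun j _ => mem a j) (fun j hj => ?_) (fun j hj => ?_) (fun j _ => ?_)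
  · rw [toIocMod_toIocMod, toIocMod_eq_self]; simpa using hj
  · rw [toIocMod_toIocMod, toIocMod_eq_self]; simpa using hj
  · rw [toIocMod, hf.sub_zsmul_eq]

lemma sum_Ioc_comp_add (hf : Periodic f T) (hT : 0 < T) (a : ℤ) :
    ∑ j ∈ Ioc 0 T, f (j + a) = ∑ j ∈ Ioc 0 T, f j := by
  rw [← hf.sum_Ioc_add_eq hT a]
  simpa [add_comm T] using (sum_map (Ioc 0 T) (addRightEmbedding a) f).symm

lemma sum_Ioc_mul (hf : Periodic f T) (hT : 0 < T) (n : ℕ) :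
    ∑ j ∈ Ioc 0 (n * T), f j = n • ∑ j ∈ Ioc 0 T, f j := by
  induction n with
  | zero => simp
  | succ n ih =>
    rw [Nat.cast_succ, add_one_mul, ← sum_Ioc_add_sum_Ioc f (b := n * T) (by positivity)
      (le_add_of_nonneg_right hT.le), ih, hf.sum_Ioc_add_eq hT, succ_nsmul]

lemma exists_abs_le {g : ℤ → ℝ} (hg : Periodic g T) (hT : 0 < T) : ∃ J, ∀ k, |g k| ≤ J :=
  ⟨∑ k ∈ Ico 0 T, |g k|, fun k => by
    obtain ⟨k', hk', hkk'⟩ := hg.exists_mem_Ico₀ hT k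
    rw [hkk']
    exact single_le_sum (f := fun k => |g k|) (fun _ _ => abs_nonneg _) (by simpa using hk')⟩

end Function.Periodic

section PartialDerivatives

variable {F : (ℤ → ℝ) → ℝ}

lemma hasDerivAt_update_pd
    (hF : ∀ (z : ℤ → ℝ) (a : ℤ), DifferentiableAt ℝ (fun t => F (update z a t)) (z a))
    (x : ℤ → ℝ) (a : ℤ) (s : ℝ) :
    HasDerivAt (fun t => F (update x a t)) (pd F a (update x a s)) s := by
  simpa only [pd, update_idem, update_self] using (hF (update x a s) a).hasDerivAt

lemma DependsOn.pd {s : Set ℤ} (hF : DependsOn F s) (i : ℤ) : DependsOn (pd F i) (insert i s) := by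
  intro x y hxy
  have hupd : ∀ t, F (Function.update x i t) = F (Function.update y i t) := fun t =>
    hF fun k hk => by
      rcases eq_or_ne k i with rfl | hki
      · simp
      · simpa [hki] using hxy k (Set.mem_insert_of_mem i hk)
  simp only [_root_.pd, funext hupd, hxy i (Set.mem_insert i s)]

lemma DependsOn.apply_piecewise {A : Finset ℤ} (hF : DependsOn F ↑A) (z z' : ℤ → ℝ) :
    F (A.piecewise z z') = F z :=
  hF fun _ hk => A.piecewise_eq_of_mem _ _ hk

lemma pd_le_pd_of_le {i : ℤ} (hmono : ∀ k ≠ i, ∀ z, Antitone fun t => pd F i (update z k t))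
    {A : Finset ℤ} {x y : ℤ → ℝ} (hA : ∀ k ∉ A, x k = y k) (hxy : x ≤ y) (hi : x i = y i) :
    pd F i y ≤ pd F i x := by
  classical
  induction A using Finset.induction_on generalizing y with
  | empty => rw [funext fun k => hA k (notMem_empty k)]
  | insert a B ha ih =>
    set w := update y a (x a)
    have hw : ∀ k ∉ B, x k = w k := fun k hk => by
      rcases eq_or_ne k a with rfl | hka
      · simp [w]
      · simpa [w, hka] using hA k (by simp [hka, hk])
    have hxw : x ≤ w := fun k => by
      rcases eq_or_ne k a with rfl | hka
      · simp [w]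
      · simpa [w, hka] using hxy k
    have hwi : x i = w i := by
      rcases eq_or_ne i a with rfl | hia
      · simp [w]
      · simpa [w, hia] using hi
    calc pd F i y ≤ pd F i w := by
          rcases eq_or_ne a i with rfl | hai
          · simp [w, hi]
          · simpa [w] using hmono a hai y (hxy a)
      _ ≤ pd F i x := ih hw hxw hwi

variable (hF : ∀ (z : ℤ → ℝ) (a : ℤ), DifferentiableAt ℝ (fun t => F (update z a t)) (z a))
include hF

lemma abs_sub_update_le {C : ℝ} {i : ℤ} (hC : ∀ z, |pd F i z| ≤ C) (x : ℤ → ℝ) (a b : ℝ) :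
    |F (update x i b) - F (update x i a)| ≤ C * |b - a| := by
  simpa [Real.norm_eq_abs] using Convex.norm_image_sub_le_of_norm_deriv_le (𝕜 := ℝ)
    (fun t _ => (hasDerivAt_update_pd hF x i t).differentiableAt)
    (fun t _ => by rw [(hasDerivAt_update_pd hF x i t).deriv, Real.norm_eq_abs]; exact hC _)
    convex_univ (Set.mem_univ a) (Set.mem_univ b)

lemma abs_sub_le_sum {C : ℝ} (hC : ∀ i z, |pd F i z| ≤ C) {A : Finset ℤ} {z z' : ℤ → ℝ}
    (hA : ∀ k ∉ A, z k = z' k) : |F z - F z'| ≤ C * ∑ k ∈ A, |z k - z' k| := by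
  classical
  induction A using Finset.induction_on generalizing z with
  | empty => simp [funext fun k => hA k (notMem_empty k)]
  | insert a B ha ih =>
    set w := update z a (z' a)
    have hw : ∀ k ∉ B, w k = z' k := fun k hk => by
      rcases eq_or_ne k a with rfl | hka
      · simp [w]
      · simpa [w, hka] using hA k (by simp [hka, hk])
    have hwB : ∑ k ∈ B, |w k - z' k| = ∑ k ∈ B, |z k - z' k| :=
      sum_congr rfl fun k hk => by simp only [w, update_of_ne (ne_of_mem_of_not_mem hk ha)]
    have hza : |F z - F w| ≤ C * |z a - z' a| := by
      simpa [w] using abs_sub_update_le hF (hC a) z (z' a) (z a)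
    calc |F z - F z'| ≤ |F z - F w| + |F w - F z'| := abs_sub_le _ _ _
      _ ≤ C * |z a - z' a| + C * ∑ k ∈ B, |z k - z' k| := by
        rw [← hwB]; exact add_le_add hza (ih hw)
      _ = C * ∑ k ∈ insert a B, |z k - z' k| := by rw [sum_insert ha, mul_add]

lemma sub_update_le_sub_update {i : ℤ}
    (hanti : ∀ ⦃x y : ℤ → ℝ⦄, x ≤ y → x i = y i → pd F i y ≤ pd F i x)
    {z w : ℤ → ℝ} (hzw : z ≤ w) {a b : ℝ} (hab : a ≤ b) :
    F (update w i b) - F (update w i a) ≤ F (update z i b) - F (update z i a) := by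
  have hmono : Monotone fun t => F (update z i t) - F (update w i t) :=
    monotone_of_hasDerivAt_nonneg
      (fun t => (hasDerivAt_update_pd hF z i t).sub (hasDerivAt_update_pd hF w i t))
      fun t => sub_nonneg.2 (hanti (update_le_update_iff.2 ⟨le_rfl, fun j _ => hzw j⟩) (by simp))
  linarith [hmono hab]

lemma inf_add_sup_sub_le_update
    (hanti : ∀ i ⦃x y : ℤ → ℝ⦄, x ≤ y → x i = y i → pd F i y ≤ pd F i x) (x y : ℤ → ℝ) (a : ℤ) :
    F (x ⊓ y) + F (x ⊔ y) - F x ≤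
      F (update x a (y a) ⊓ y) + F (update x a (y a) ⊔ y) - F (update x a (y a)) := by
  set x' := update x a (y a)
  have hx : x = update x' a (x a) := by simp [x']
  have hx' : x' = update x' a (y a) := by simp [x']
  rcases le_or_gt (x a) (y a) with h | h
  · have hsup : x ⊔ y = x' ⊔ y := by
      ext k
      rcases eq_or_ne k a with rfl | hka
      · simp [x', h]
      · simp [x', hka]
    have hinf : x ⊓ y = update (x' ⊓ y) a (x a) := by
      ext k
      rcases eq_or_ne k a with rfl | hka
      · simp [h]
      · simp [x', hka]
    have hinf' : x' ⊓ y = update (x' ⊓ y) a (y a) := by simp [x']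
    have inc := sub_update_le_sub_update hF (hanti a) (inf_le_left : x' ⊓ y ≤ x') h
    rw [← hinf, ← hinf', ← hx, ← hx'] at inc
    rw [hsup]
    linarith
  · have hinf : x ⊓ y = x' ⊓ y := by
      ext k
      rcases eq_or_ne k a with rfl | hka
      · simp [x', h.le]
      · simp [x', hka]
    have hsup : x ⊔ y = update (x' ⊔ y) a (x a) := by
      ext k
      rcases eq_or_ne k a with rfl | hka
      · simp [h.le]
      · simp [x', hka]
    have hsup' : x' ⊔ y = update (x' ⊔ y) a (y a) := by simp [x']
    have inc := sub_update_le_sub_update hF (hanti a) (le_sup_left : x' ≤ x' ⊔ y) h.le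
    rw [← hsup, ← hsup', ← hx, ← hx'] at inc
    rw [hinf]
    linarith

lemma inf_add_sup_le (hanti : ∀ i ⦃x y : ℤ → ℝ⦄, x ≤ y → x i = y i → pd F i y ≤ pd F i x)
    {A : Finset ℤ} {x y : ℤ → ℝ} (hA : ∀ k ∉ A, x k = y k) :
    F (x ⊓ y) + F (x ⊔ y) ≤ F x + F y := by
  classical
  induction A using Finset.induction_on generalizing x with
  | empty => rw [funext fun k => hA k (notMem_empty k), inf_idem, sup_idem]
  | insert a B ha ih =>
    have hx' : ∀ k ∉ B, update x a (y a) k = y k := fun k hk => by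
      rcases eq_or_ne k a with rfl | hka
      · simp
      · simpa [hka] using hA k (by simp [hka, hk])
    linarith [inf_add_sup_sub_le_update hF hanti x y a, ih hx']

end PartialDerivatives

namespace SatisfiesAE

variable {r : ℕ} {C : ℝ} {S : ℤ → (ℤ → ℝ) → ℝ} (hS : SatisfiesAE r C S)
include hS

lemma dependsOn (j : ℤ) : DependsOn (S j) ↑(Icc (j - r) (j + r)) := fun x y h =>
  hS.finRange j x y fun i hi => h i (by rw [abs_le] at hi; simp only [coe_Icc, Set.mem_Icc]; omega)

lemma apply_tau (j k l : ℤ) (x : ℤ → ℝ) : S j (tau k l x) = S (j - k) x := by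
  simpa using (hS.shiftInv (j - k) k l x).symm

lemma apply_eq_apply_zero (j : ℤ) (x : ℤ → ℝ) : S j x = S 0 (tau (-j) 0 x) := by
  simpa using hS.shiftInv j (-j) 0 x

lemma periodic {p q : ℤ} {x : ℤ → ℝ} (hx : tau p q x = x) : Periodic (fun j => S j x) p :=
  fun j => by simpa [hx] using (hS.shiftInv j p q x).symm

lemma coercive_uniform (M : ℝ) : ∃ R, ∀ j x, R ≤ |x (j + 1) - x j| → M ≤ S j x := by
  obtain ⟨R, hR⟩ := hS.coercive 0 1 (by norm_num) M
  refine ⟨R, fun j x h => ?_⟩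
  rw [hS.apply_eq_apply_zero]
  exact hR _ (by simpa [tau_apply, add_comm] using h)

lemma exists_forall_le : ∃ B, ∀ j x, B ≤ S j x := by
  obtain ⟨R, hR⟩ := hS.coercive 0 1 (by norm_num) 0
  set R' := max R 0
  have hR' : 0 ≤ C * R' := mul_nonneg hS.C_pos.le (le_max_right _ _)
  refine ⟨-(2 * (C * R')), fun j x => ?_⟩
  rw [hS.apply_eq_apply_zero]
  generalize tau (-j) 0 x = y
  rcases le_or_gt R |y 1 - y 0| with h | h
  · linarith [hR y h]
  · -- moving `y 1` to distance `R'` from `y 0` costs at most `2 C R'`, and then `S 0 ≥ 0`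
    have h0 : 0 ≤ S 0 (update y 1 (y 0 + R')) :=
      hR _ (by simp [abs_of_nonneg (le_max_right R 0), R'])
    have hlip := abs_sub_update_le (fun z a => hS.diff1 0 a z) (fun z => hS.bdd1 0 1 z) y
      (y 0 + R') (y 1)
    rw [update_eq_self] at hlip
    have hd : |y 1 - (y 0 + R')| ≤ 2 * R' := by
      rw [abs_lt] at h
      rw [abs_le]
      constructor <;> linarith [le_max_left R 0, le_max_right R 0]
    have := (abs_le.1 (hlip.trans (mul_le_mul_of_nonneg_left hd hS.C_pos.le))).1
    linarith

lemma antitone_pd (j : ℤ) {i k : ℤ} (hik : i ≠ k) (z : ℤ → ℝ) :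
    Antitone fun t => pd (S j) i (update z k t) :=
  antitone_of_hasDerivAt_nonpos (hasDerivAt_update_pd (fun z a => hS.diff2 j i a z) z k)
    fun _ => hS.mono j i k hik _

lemma strictAnti_pd {j k : ℤ} (hjk : |j - k| = 1) (z : ℤ → ℝ) :
    StrictAnti fun t => pd (S j) j (update z k t) :=
  strictAnti_of_hasDerivAt_neg (hasDerivAt_update_pd (fun z a => hS.diff2 j j a z) z k)
    fun _ => hS.monoStrict j k hjk _

lemma pd_le_pd (j : ℤ) {i : ℤ} {x y : ℤ → ℝ} (hxy : x ≤ y) (hi : x i = y i) :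
    pd (S j) i y ≤ pd (S j) i x := by
  classical
  set A := Icc (j - r) (j + r)
  have hdep : DependsOn (S j) ↑A := hS.dependsOn j
  have hy : pd (S j) i y = pd (S j) i (A.piecewise y x) := hdep.pd i fun k hk => by
    by_cases hkA : k ∈ A
    · simp [hkA]
    · obtain rfl : k = i := by
        simpa only [Set.mem_insert_iff, mem_coe, hkA, or_false] using hk
      simp [hkA, hi]
  rw [hy]
  refine pd_le_pd_of_le (fun k hk z => hS.antitone_pd j hk.symm z) (A := A)
    (fun k hk => by simp [hk]) (fun k => ?_) ?_
  · by_cases hk : k ∈ A <;> simp [hk, hxy k]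
  · by_cases hiA : i ∈ A <;> simp [hiA, hi]

lemma inf_add_sup_le (j : ℤ) (x y : ℤ → ℝ) :
    S j (x ⊓ y) + S j (x ⊔ y) ≤ S j x + S j y := by
  classical
  set A := Icc (j - r) (j + r)
  have hdep : DependsOn (S j) ↑A := hS.dependsOn j
  have h := _root_.inf_add_sup_le (fun z a => hS.diff1 j a z) (fun i _ _ => hS.pd_le_pd j)
    (A := A) (x := A.piecewise x y) (y := y) (fun k hk => by simp [hk])
  rwa [hdep.apply_piecewise, hdep (x := A.piecewise x y ⊓ y) (y := x ⊓ y)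
    (fun k hk => by simp [piecewise_eq_of_mem _ _ _ (mem_coe.1 hk)]),
    hdep (x := A.piecewise x y ⊔ y) (y := x ⊔ y)
    (fun k hk => by simp [piecewise_eq_of_mem _ _ _ (mem_coe.1 hk)])] at h

lemma abs_sub_le (j : ℤ) (z z' : ℤ → ℝ) :
    |S j z - S j z'| ≤ C * ∑ k ∈ Icc (j - r) (j + r), |z k - z' k| := by
  classical
  set A := Icc (j - r) (j + r)
  have h := abs_sub_le_sum (fun z a => hS.diff1 j a z) (fun i z => hS.bdd1 j i z) (A := A)
    (z := A.piecewise z z') (z' := z') (fun k hk => by simp [hk])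
  have hsum : ∑ k ∈ A, |A.piecewise z z' k - z' k| = ∑ k ∈ A, |z k - z' k| :=
    sum_congr rfl fun k hk => by rw [piecewise_eq_of_mem _ _ _ hk]
  rwa [(hS.dependsOn j).apply_piecewise, hsum] at h

lemma abs_sub_le_of_forall_abs_sub_le (j : ℤ) {z z' : ℤ → ℝ} {J : ℝ}
    (h : ∀ k, |z k - z' k| ≤ J) : |S j z - S j z'| ≤ C * ((2 * r + 1) * J) := by
  refine (hS.abs_sub_le j z z').trans (mul_le_mul_of_nonneg_left ?_ hS.C_pos.le)
  refine (sum_le_card_nsmul _ _ _ fun k _ => h k).trans_eq ?_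
  rw [Int.card_Icc, show j + r + 1 - (j - r) = ((2 * r + 1 : ℕ) : ℤ) by push_cast; ring,
    Int.toNat_natCast, nsmul_eq_mul]
  push_cast
  ring

end SatisfiesAE

section Action

variable {r : ℕ} {C : ℝ} {S : ℤ → (ℤ → ℝ) → ℝ}

lemma Wper_eq_sum_Ioc (p : ℕ) (x : ℤ → ℝ) : Wper S p x = ∑ j ∈ Ioc 0 (p : ℤ), S j x := by
  unfold Wper
  congr 1
  ext j
  simp only [mem_Icc, mem_Ioc]
  omega

variable (hS : SatisfiesAE r C S)
include hS

lemma continuous_Wper (p : ℕ) : Continuous (Wper S p) :=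
  continuous_finsetSum _ fun j _ => hS.contS j

lemma Wper_tau {p : ℕ} (hp : 0 < p) {q : ℤ} {x : ℤ → ℝ} (hx : tau p q x = x) (k l : ℤ) :
    Wper S p (tau k l x) = Wper S p x := by
  simp only [Wper_eq_sum_Ioc, hS.apply_tau, sub_eq_add_neg]
  exact (hS.periodic hx).sum_Ioc_comp_add (by exact_mod_cast hp) (-k)

lemma Wper_mul {p : ℕ} (hp : 0 < p) {q : ℤ} {x : ℤ → ℝ} (hx : tau p q x = x) (n : ℕ) :
    Wper S (n * p) x = n * Wper S p x := by
  rw [Wper_eq_sum_Ioc, Wper_eq_sum_Ioc, Nat.cast_mul,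
    (hS.periodic hx).sum_Ioc_mul (by exact_mod_cast hp) n, nsmul_eq_mul]

lemma Wper_inf_add_sup_le (p : ℕ) (x y : ℤ → ℝ) :
    Wper S p (x ⊓ y) + Wper S p (x ⊔ y) ≤ Wper S p x + Wper S p y := by
  simp only [Wper, ← sum_add_distrib]
  exact sum_le_sum fun j _ => hS.inf_add_sup_le j x y

end Action

section PeriodicMinimizers

variable {r : ℕ} {C : ℝ} {S : ℤ → (ℤ → ℝ) → ℝ} (hS : SatisfiesAE r C S)
include hS

lemma PerMin.shift {p : ℕ} (hp : 0 < p) {q : ℤ} {x : ℤ → ℝ} (hx : PerMin S p q x) (k l : ℤ) :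
    PerMin S p q (tau k l x) :=
  ⟨by rw [tau_comm, hx.1], fun y hy => (Wper_tau hS hp hx.1 k l).symm ▸ hx.2 y hy⟩

lemma PerMin.inf {p : ℕ} {q : ℤ} {x y : ℤ → ℝ} (hx : PerMin S p q x) (hy : PerMin S p q y) :
    PerMin S p q (x ⊓ y) := by
  refine ⟨by rw [tau_inf, hx.1, hy.1], fun z hz => ?_⟩
  have hsup := hx.2 (x ⊔ y) (by rw [tau_sup, hx.1, hy.1])
  linarith [Wper_inf_add_sup_le hS p x y, hy.2 x hx.1, hx.2 z hz]

lemma isClosed_setOf_perMin (p : ℕ) (q : ℤ) : IsClosed {x | PerMin S p q x} := by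
  have h : {x | PerMin S p q x} = {x | tau p q x = x} ∩
      ⋂ y ∈ {y | tau p q y = y}, {x | Wper S p x ≤ Wper S p y} := by
    ext x
    simp [PerMin]
  rw [h]
  exact (isClosed_eq (continuous_tau _ _) continuous_id).inter
    (isClosed_biInter fun y _ => isClosed_le (continuous_Wper hS p) continuous_const)

lemma isCompact_perSublevel {p : ℕ} (hp : 0 < p) (q : ℤ) (c : ℝ) :
    IsCompact {x | tau p q x = x ∧ x 1 ∈ Set.Icc (0 : ℝ) 1 ∧ Wper S p x ≤ c} := by
  obtain ⟨B, hB⟩ := hS.exists_forall_le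
  obtain ⟨R, hR⟩ := hS.coercive_uniform (c - p * B + B + 1)
  have hstep : ∀ x ∈ {x | tau p q x = x ∧ x 1 ∈ Set.Icc (0 : ℝ) 1 ∧ Wper S p x ≤ c},
      ∀ i, |x (i + 1) - x i| ≤ R := by
    rintro x ⟨hx, -, hW⟩ i
    by_contra! hi
    obtain ⟨j, hj, hij⟩ := (hS.periodic hx).exists_mem_Ico (by exact_mod_cast hp) i 1
    have hj' : j ∈ Icc 1 (p : ℤ) := by
      simp only [Set.mem_Ico, mem_Icc] at hj ⊢
      omega
    have hsum : ∑ k ∈ Icc 1 (p : ℤ), (S k x - B) = Wper S p x - p * B := by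
      simp [Wper, sum_sub_distrib]
    have := single_le_sum (fun k _ => sub_nonneg.2 (hB k x)) hj'
    have := hR i x hi.le
    linarith
  refine IsCompact.of_isClosed_subset
    (isCompact_univ_pi fun i => isCompact_Icc (a := -(1 + R * |(i : ℝ) - 1|))
      (b := 1 + R * |(i : ℝ) - 1|))
    ((isClosed_eq (continuous_tau _ _) continuous_id).inter
      ((isClosed_Icc.preimage (continuous_apply 1)).inter
        (isClosed_le (continuous_Wper hS p) continuous_const)))
    fun x hx i _ => ?_
  have h1 := abs_sub_le_mul_of_abs_succ_sub_le (hstep x hx) i 1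
  obtain ⟨-, ⟨h0, h1'⟩, -⟩ := hx
  rw [abs_le] at h1
  simp only [Int.cast_one] at h1
  constructor <;> linarith

lemma exists_perMin {p : ℕ} (hp : 0 < p) (q : ℤ) : ∃ x, PerMin S p q x := by
  set x₀ : ℤ → ℝ := fun i => (i - 1) * q / p
  have hx₀ : tau p q x₀ = x₀ := by
    ext i
    simp only [x₀, tau_apply, Int.cast_sub, Int.cast_natCast]
    field_simp
    ring
  obtain ⟨xm, ⟨hxm, -, hxm₀⟩, hmin⟩ := (isCompact_perSublevel hS hp q (Wper S p x₀)).exists_isMinOn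
    ⟨x₀, hx₀, by simp [x₀], le_rfl⟩ (continuous_Wper hS p).continuousOn
  refine ⟨xm, hxm, fun y hy => ?_⟩
  -- an integer translate `y'` of `y` has `y' 1 ∈ [0, 1)` and the same action
  set y' := tau 0 (-⌊y 1⌋) y
  have hy' : tau p q y' = y' := by rw [tau_comm, hy]
  rw [← Wper_tau hS hp hy 0 (-⌊y 1⌋)]
  by_cases h : Wper S p y' ≤ Wper S p x₀
  · have hy'1 : y' 1 ∈ Set.Icc (0 : ℝ) 1 := by
      rw [show y' 1 = Int.fract (y 1) by simp [y', tau_apply, Int.fract, sub_eq_add_neg]]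
      exact ⟨Int.fract_nonneg _, (Int.fract_lt_one _).le⟩
    exact hmin ⟨hy', hy'1, h⟩
  · linarith

lemma exists_perMin_tau_eq {p : ℕ} (hp : 0 < p) (q : ℤ) {n : ℕ} (hn : 0 < n) :
    ∃ m, PerMin S (n * p) (n * q) m ∧ tau p q m = m := by
  obtain ⟨y, hy⟩ := exists_perMin hS (Nat.mul_pos hn hp) (n * q)
  have hne : (range n).Nonempty := nonempty_range_iff.2 hn.ne'
  have hyn : tau (n * p) (n * q) y = y := by simpa using hy.1
  have hstep : ∀ k : ℕ,
      tau p q (tau (k * p) (k * q) y) = tau ((k + 1 : ℕ) * p) ((k + 1 : ℕ) * q) y :=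
    fun k => by rw [tau_tau]; push_cast; ring_nf
  -- the infimum of the `τ_{p,q}`-orbit of `y`
  refine ⟨(range n).inf' hne fun k => tau (k * p) (k * q) y,
    inf'_induction hne _ (p := PerMin S (n * p) (n * q)) (fun _ ha _ hb => ha.inf hS hb)
      fun k _ => hy.shift hS (Nat.mul_pos hn hp) _ _, ?_⟩
  rw [apply_inf'_eq_inf'_comp hne (tau p q) (tau_inf p q)]
  apply le_antisymm
  · refine le_inf' _ _ fun k hk => ?_
    rcases k with _ | k
    · refine (inf'_le _ (mem_range.2 (show n - 1 < n by omega))).trans_eq ?_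
      rw [comp_apply, hstep, Nat.sub_add_cancel hn, hyn]
      simp
    · exact (inf'_le _ (mem_range.2 (Nat.lt_of_succ_lt (mem_range.1 hk)))).trans_eq
        (by rw [comp_apply, hstep])
  · refine le_inf' _ _ fun k hk => ?_
    rcases (show k + 1 ≤ n from mem_range.1 hk).eq_or_lt with h | h
    · refine (inf'_le _ (mem_range.2 hn)).trans_eq ?_
      rw [comp_apply, hstep, h, hyn]
      simp
    · exact (inf'_le _ (mem_range.2 h)).trans_eq (by rw [comp_apply, hstep])

lemma PerMin.mul {p : ℕ} (hp : 0 < p) {q : ℤ} {x : ℤ → ℝ} (hx : PerMin S p q x) {n : ℕ}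
    (hn : 0 < n) : PerMin S (n * p) (n * q) x := by
  obtain ⟨m, hm, hmp⟩ := exists_perMin_tau_eq hS hp q hn
  refine ⟨by rw [Nat.cast_mul]; exact tau_mul_eq_self hx.1 n, fun w hw => ?_⟩
  calc Wper S (n * p) x = n * Wper S p x := Wper_mul hS hp hx.1 n
    _ ≤ n * Wper S p m := by gcongr; exact hx.2 m hmp
    _ = Wper S (n * p) m := (Wper_mul hS hp hmp n).symm
    _ ≤ Wper S (n * p) w := hm.2 w hw

end PeriodicMinimizers

section GlobalMinimizers

variable {r : ℕ} {C : ℝ} {S : ℤ → (ℤ → ℝ) → ℝ} (hS : SatisfiesAE r C S)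
include hS

lemma Wdiff_eq_sum {J : Finset ℤ} {x y : ℤ → ℝ} (hJ : ∀ j ∉ J, ∀ m, |m - j| ≤ r → y m = 0) :
    Wdiff S x y = ∑ j ∈ J, (S j (fun i => x i + y i) - S j x) :=
  tsum_eq_sum fun j hj => sub_eq_zero.2 (hS.finRange j _ _ fun m hm => by simp [hJ j hj m hm])

lemma Wper_add_sub_eq_Wdiff {T : ℕ} (hT : 0 < T) {Q : ℤ} {x y Y : ℤ → ℝ} (hx : tau T Q x = x)
    (hY : Periodic Y T) {a b : ℤ} (hab : b - a + 2 * r < T) (hy : support y ⊆ Set.Icc a b)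
    (hYy : ∀ m, b - T < m → m < a + T → Y m = y m) :
    Wper S T (fun i => x i + Y i) - Wper S T x = Wdiff S x y := by
  have hz := tau_add_periodic_eq_self hx hY
  set c := a - r - 1
  have hrep := ((hS.periodic hz).sub (hS.periodic hx)).sum_Ioc_add_eq (by omega) c
  simp only [Pi.sub_apply] at hrep
  rw [Wper_eq_sum_Ioc, Wper_eq_sum_Ioc, ← sum_sub_distrib, ← hrep, Wdiff_eq_sum hS]
  · refine sum_congr rfl fun j hj => ?_
    congr 1
    refine hS.finRange j _ _ fun m hm => ?_
    rw [abs_le] at hm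
    rw [mem_Ioc] at hj
    simp only [hYy m (by omega) (by omega)]
  · intro j hj m hm
    by_contra h
    have := hy h
    simp only [mem_Ioc, Set.mem_Icc] at hj this
    rw [abs_le] at hm
    omega

lemma PerMin.globalMin {p : ℕ} (hp : 0 < p) {q : ℤ} {x : ℤ → ℝ} (hx : PerMin S p q x) :
    GlobalMin S x := by
  intro y hy
  obtain ⟨a, b, hab⟩ := bddBelow_bddAbove_iff_subset_Icc.1 ⟨hy.bddBelow, hy.bddAbove⟩
  replace hab : support y ⊆ Set.Icc a (max a b) :=
    hab.trans (Set.Icc_subset_Icc_right (le_max_right _ _))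
  -- compare `y` with its repetition of period `N p`, which exceeds the length of its support
  set N := (max a b - a + 2 * r + 1).toNat
  have hN : 0 < N := by omega
  have hT : max a b - a + 2 * r < ((N * p : ℕ) : ℤ) := by
    push_cast
    nlinarith [show (max a b - a + 2 * r + 1 : ℤ) ≤ N by omega, show (1 : ℤ) ≤ p by omega]
  obtain ⟨Y, hYper, hYy⟩ := exists_periodic_eqOn (T := ((N * p : ℕ) : ℤ)) (by omega)
    (le_max_left a b) hab
  have hxN := hx.mul hS hp hN
  rw [← Wper_add_sub_eq_Wdiff hS (Nat.mul_pos hN hp) hxN.1 hYper hT hab hYy]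
  exact sub_nonneg.2 (hxN.2 _ (tau_add_periodic_eq_self hxN.1 hYper))

lemma GlobalMin.sum_sub_nonneg {x z : ℤ → ℝ} (hx : GlobalMin S x) {a b : ℤ}
    (hz : ∀ k, k < a ∨ b < k → z k = x k) :
    0 ≤ ∑ j ∈ Ioc (a - r - 1) (b + r), (S j z - S j x) := by
  have hvar := hx (fun k => z k - x k) ((Set.finite_Icc a b).subset fun k hk => by
    by_contra h
    simp only [Set.mem_Icc, not_and_or, not_le] at h
    exact hk (sub_eq_zero.2 (hz k h)))
  rwa [Wdiff_eq_sum hS (J := Ioc (a - r - 1) (b + r)) fun j hj m hm => by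
    simp only [mem_Ioc, not_and_or, not_lt, not_le] at hj
    rw [abs_le] at hm
    exact sub_eq_zero.2 (hz m (by omega)), funext fun i => add_sub_cancel (x i) (z i)] at hvar

lemma GlobalMin.exists_bound {p : ℕ} (hp : 0 < p) {q : ℤ} {x w : ℤ → ℝ} (hx : GlobalMin S x)
    (hxp : tau p q x = x) (hwp : tau p q w = w) :
    ∃ G, ∀ n : ℕ, n * (Wper S p x - Wper S p w) ≤ G := by
  have hper : Periodic (fun k => w k - x k) p := fun k => by
    simp only [apply_add_of_tau_eq hwp, apply_add_of_tau_eq hxp]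
    ring
  obtain ⟨J, hJ⟩ := hper.exists_abs_le (by exact_mod_cast hp)
  -- glue `w` into `x` along `n` periods; each of the `4 r` boundary terms is at most `G₀`
  set G₀ := C * ((2 * r + 1) * J)
  refine ⟨4 * r * G₀, fun n => ?_⟩
  set A := Icc (1 - r : ℤ) (n * p + r)
  set z := A.piecewise w x
  have hbdry : ∀ j, S j z - S j x ≤ G₀ := fun j =>
    (le_abs_self _).trans <| hS.abs_sub_le_of_forall_abs_sub_le j fun k => by
      by_cases hk : k ∈ A <;> simp [z, hk, hJ, (abs_nonneg _).trans (hJ 0)]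
  have hmid : ∑ j ∈ Ioc 0 (n * p : ℤ), (S j z - S j x) = n * (Wper S p w - Wper S p x) := by
    have hrep := ((hS.periodic hwp).sub (hS.periodic hxp)).sum_Ioc_mul (by exact_mod_cast hp) n
    simp only [Pi.sub_apply, nsmul_eq_mul] at hrep
    rw [Wper_eq_sum_Ioc, Wper_eq_sum_Ioc, ← sum_sub_distrib, ← hrep]
    refine sum_congr rfl fun j hj => ?_
    rw [mem_Ioc] at hj
    congr 1
    refine hS.finRange j _ _ fun m hm => ?_
    rw [abs_le] at hm
    exact piecewise_eq_of_mem _ _ _ (by simp only [A, mem_Icc]; omega)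
  have hglue := hx.sum_sub_nonneg hS (z := z) (a := 1 - r) (b := n * p + r) fun k hk =>
    piecewise_eq_of_notMem _ _ _ (by simp only [A, mem_Icc]; omega)
  have hnp : (0 : ℤ) ≤ n * p := by positivity
  rw [← sum_Ioc_add_sum_Ioc _ (by omega : 1 - r - r - 1 ≤ (0 : ℤ)) (by omega),
    ← sum_Ioc_add_sum_Ioc _ hnp (by omega), hmid] at hglue
  have h1 := sum_Ioc_le_mul hbdry (by omega : 1 - r - r - 1 ≤ (0 : ℤ))
  have h2 := sum_Ioc_le_mul hbdry (by omega : (n * p : ℤ) ≤ n * p + r + r)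
  push_cast at h1 h2
  linarith

lemma GlobalMin.perMin {p : ℕ} (hp : 0 < p) {q : ℤ} {x : ℤ → ℝ} (hx : GlobalMin S x)
    (hxp : tau p q x = x) : PerMin S p q x := by
  refine ⟨hxp, fun w hw => ?_⟩
  obtain ⟨G, hG⟩ := hx.exists_bound hS hp hxp hw
  by_contra! h
  obtain ⟨n, hn⟩ := exists_nat_gt (G / (Wper S p x - Wper S p w))
  rw [div_lt_iff₀ (sub_pos.2 h)] at hn
  linarith [hG n]

end GlobalMinimizers

/-- The Euler–Lagrange equations `∑ⱼ ∂ᵢ Sⱼ(x) = 0`; by finite range only `|i - j| ≤ r` matter. -/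
def IsEquilibrium (r : ℕ) (S : ℤ → (ℤ → ℝ) → ℝ) (x : ℤ → ℝ) : Prop :=
  ∀ i : ℤ, ∑ j ∈ Icc (i - r) (i + r), pd (S j) i x = 0

section Stationary

variable {r : ℕ} {C : ℝ} {S : ℤ → (ℤ → ℝ) → ℝ} (hS : SatisfiesAE r C S)
include hS

lemma GlobalMin.isEquilibrium {x : ℤ → ℝ} (hx : GlobalMin S x) : IsEquilibrium r S x := by
  intro i
  set g : ℝ → ℝ := fun t => ∑ j ∈ Icc (i - r) (i + r), (S j (update x i (x i + t)) - S j x)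
  have hg : ∀ t, Wdiff S x (Pi.single i t) = g t := fun t => by
    rw [Wdiff_eq_sum hS fun j hj m hm => ?_]
    · refine sum_congr rfl fun j _ => ?_
      congr 2
      ext k
      rcases eq_or_ne k i with rfl | hk
      · simp
      · simp [hk]
    · have hmi : m ≠ i := by
        rintro rfl
        rw [abs_le] at hm
        exact hj (mem_Icc.2 ⟨by omega, by omega⟩)
      simp [hmi]
  have hmin : IsLocalMin g 0 := Eventually.of_forall fun t => by
    rw [show g 0 = 0 by simp [g], ← hg t]
    exact hx _ ((Set.finite_singleton i).subset Pi.support_single_subset)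
  have hderiv : HasDerivAt g (∑ j ∈ Icc (i - r) (i + r), pd (S j) i x) 0 :=
    HasDerivAt.fun_sum fun j _ => HasDerivAt.sub_const (S j x) <| by
      simpa using (hasDerivAt_update_pd (fun z a => hS.diff1 j a z) x i (x i + 0)).comp_const_add
        (x i) 0
  exact hmin.hasDerivAt_eq_zero hderiv

lemma IsEquilibrium.eq_of_le {x y : ℤ → ℝ} (hx : IsEquilibrium r S x) (hy : IsEquilibrium r S y)
    (hxy : x ≤ y) {i₀ : ℤ} (h₀ : x i₀ = y i₀) : x = y := by
  -- a contact point `i` spreads to `i ± 1`: otherwise `∂ᵢ S_i` strictly separates the two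
  -- Euler–Lagrange sums at `i`, whose other terms are ordered by monotonicity
  have hspread : ∀ i k, |i - k| = 1 → x i = y i → x k = y k := by
    intro i k hik hi
    by_contra hk
    have hlt : x k < y k := (hxy k).lt_of_ne hk
    have hki : k ≠ i := by rintro rfl; simp at hik
    have hii : pd (S i) i y < pd (S i) i x :=
      calc pd (S i) i y < pd (S i) i (update y k (x k)) := by
            simpa using hS.strictAnti_pd hik y hlt
        _ ≤ pd (S i) i x := hS.pd_le_pd i (le_update_iff.2 ⟨le_rfl, fun j _ => hxy j⟩)
            (by rw [update_of_ne hki.symm, hi])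
    have hmem : i ∈ Icc (i - r) (i + r) := mem_Icc.2 ⟨by omega, by omega⟩
    have := sum_lt_sum (fun j _ => hS.pd_le_pd j hxy hi) ⟨i, hmem, hii⟩
    rw [hx i, hy i] at this
    exact lt_irrefl _ this
  ext i
  induction i using Int.inductionOn' (b := i₀) with
  | zero => exact h₀
  | succ k _ hk => exact hspread k (k + 1) (by simp) hk
  | pred k _ hk => exact hspread k (k - 1) (by simp) hk

lemma PerMin.lt_or_gt {p : ℕ} (hp : 0 < p) {q : ℤ} {x y : ℤ → ℝ} (hx : PerMin S p q x)
    (hy : PerMin S p q y) (hne : x ≠ y) : (∀ i, x i < y i) ∨ (∀ i, y i < x i) := by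
  have hequil : ∀ {z}, PerMin S p q z → IsEquilibrium r S z :=
    fun hz => (hz.globalMin hS hp).isEquilibrium hS
  by_cases h : ∃ i, x i ≤ y i
  · obtain ⟨i, hi⟩ := h
    have hxy : x ≤ y := inf_eq_left.1 <| (hequil (hx.inf hS hy)).eq_of_le hS (hequil hx)
      inf_le_left (i₀ := i) (by simp [hi])
    exact Or.inl fun i => (hxy i).lt_of_ne fun h => hne ((hequil hx).eq_of_le hS (hequil hy) hxy h)
  · simp only [not_exists, not_le] at h
    exact Or.inr h

lemma PerMin.birkhoff {p : ℕ} (hp : 0 < p) {q : ℤ} {x : ℤ → ℝ} (hx : PerMin S p q x) :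
    Birkhoff x := by
  intro k l k' l'
  by_cases he : tau k l x = tau k' l' x
  · exact Or.inl he.le
  · rcases (hx.shift hS hp k l).lt_or_gt hS hp (hx.shift hS hp k' l') he with h | h
    · exact Or.inl fun i => (h i).le
    · exact Or.inr fun i => (h i).le

end Stationary

/-- the collection of `(p,q)`-minimizers is nonempty, closed under pointwise
convergence, shift-invariant and strictly ordered; every `(p,q)`-minimizer is Birkhoff;
and `x ∈ X_{p,q}` is a `(p,q)`-minimizer iff it is an `(np,nq)`-minimizer for every `n ≥ 1`
iff it is a global minimizer. -/
theorem periodic_minimizers_properties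
    (r : ℕ) (C : ℝ) (S : ℤ → (ℤ → ℝ) → ℝ) (hS : SatisfiesAE r C S)
    (p : ℕ) (hp : 1 ≤ p) (q : ℤ) :
    (∃ x : ℤ → ℝ, PerMin S p q x) ∧
    (∀ x : ℕ → ℤ → ℝ, (∀ n, PerMin S p q (x n)) → ∀ xinf : ℤ → ℝ,
      (∀ i : ℤ, Filter.Tendsto (fun n => x n i) Filter.atTop (𝓝 (xinf i))) →
      PerMin S p q xinf) ∧
    (∀ x : ℤ → ℝ, PerMin S p q x → ∀ k l : ℤ, PerMin S p q (tau k l x)) ∧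
    (∀ x y : ℤ → ℝ, PerMin S p q x → PerMin S p q y → x ≠ y →
      (∀ i : ℤ, x i < y i) ∨ (∀ i : ℤ, y i < x i)) ∧
    (∀ x : ℤ → ℝ, PerMin S p q x → Birkhoff x) ∧
    (∀ x : ℤ → ℝ, tau (p : ℤ) q x = x →
      ((PerMin S p q x ↔ ∀ n : ℕ, 1 ≤ n → PerMin S (n * p) ((n : ℤ) * q) x) ∧
       (PerMin S p q x ↔ GlobalMin S x))) := by
  refine ⟨exists_perMin hS hp q,
    fun x hx xinf hlim => (isClosed_setOf_perMin hS p q).mem_of_tendsto (tendsto_pi_nhds.2 hlim)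
      (Eventually.of_forall hx),
    fun x hx => hx.shift hS hp,
    fun x y hx hy => hx.lt_or_gt hS hp hy,
    fun x hx => hx.birkhoff hS hp,
    fun x hxp => ⟨⟨fun hx n hn => hx.mul hS hp hn, fun h => by simpa using h 1 le_rfl⟩,
      ⟨fun hx => hx.globalMin hS hp, fun hx => hx.perMin hS hp hxp⟩⟩⟩
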